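/- Let N be the 9×9 complex matrix parameterized by b_1,…,b_17 according to the AB|CD tile pattern of the four-partite OPB in (ℂ^3)^{⊗4} (as in the paper's Lemma 3 proof). If rank(N) ≤ 1 and the sum of all entries of N is 0, then exactly one of the following eight cases holds (or N = 0): (i) 4b_1+b_16=0, all other b_i = 0; (ii) 4b_2+b_4=0, others 0; (iii) 4b_3+b_7=0, others 0; (iv) 4b_5+b_6=0, others 0; (v) 4b_9+b_8=0, others 0; (vi) 4b_10+b_12=0, others 0; (vii) 4b_11+b_15=0, others 0; (viii) 4b_13+b_14=0, others 0. -/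
import Mathlib

/-- The 9×9 matrix of the AB|CD flattening of the four-partite tile OPB
(Eq. (20)); rows are indexed by (a,b) ∈ AB and columns by (c,d) ∈ CD, and the
entry on tile tᵢ is bᵢ (here b i denotes b_{i+1}). -/
def Nmat (b : Fin 17 → ℂ) : Matrix (Fin 3 × Fin 3) (Fin 3 × Fin 3) ℂ :=
  fun r c =>
    if r.1 ≠ 0 ∧ r.2 ≠ 2 ∧ c.1 = 0 ∧ c.2 ≠ 0 then b 0        -- A₁ : ξη|0ξ
    else if r.1 ≠ 0 ∧ r.2 = 2 ∧ c.1 ≠ 2 ∧ c.2 ≠ 2 then b 1   -- A₂ : ξ2|ηη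
    else if r.1 ≠ 0 ∧ r.2 ≠ 0 ∧ c.1 ≠ 0 ∧ c.2 = 2 then b 2   -- A₃ : ξξ|ξ2
    else if r.1 ≠ 0 ∧ r.2 = 2 ∧ c.1 = 0 ∧ c.2 = 2 then b 3   -- A₄ : ξ2|02
    else if r.1 = 2 ∧ r.2 ≠ 2 ∧ c.1 ≠ 0 ∧ c.2 ≠ 2 then b 4   -- A₅ : 2η|ξη
    else if r.1 = 2 ∧ r.2 ≠ 2 ∧ c.1 = 0 ∧ c.2 = 0 then b 5   -- A₆ : 2η|00
    else if r.1 = 2 ∧ r.2 = 0 ∧ c.1 ≠ 0 ∧ c.2 = 2 then b 6   -- A₇ : 20|ξ2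
    else if r.1 = 2 ∧ r.2 = 2 ∧ c.1 = 2 ∧ c.2 ≠ 2 then b 7   -- A₈ : 22|2η
    else if r.1 ≠ 2 ∧ r.2 ≠ 0 ∧ c.1 = 2 ∧ c.2 ≠ 2 then b 8   -- A₉ : ηξ|2η
    else if r.1 ≠ 2 ∧ r.2 = 0 ∧ c.1 ≠ 0 ∧ c.2 ≠ 0 then b 9   -- A₁₀ : η0|ξξ
    else if r.1 ≠ 2 ∧ r.2 ≠ 2 ∧ c.1 ≠ 2 ∧ c.2 = 0 then b 10  -- A₁₁ : ηη|η0
    else if r.1 ≠ 2 ∧ r.2 = 0 ∧ c.1 = 2 ∧ c.2 = 0 then b 11  -- A₁₂ : η0|20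
    else if r.1 = 0 ∧ r.2 ≠ 0 ∧ c.1 ≠ 2 ∧ c.2 ≠ 0 then b 12  -- A₁₃ : 0ξ|ηξ
    else if r.1 = 0 ∧ r.2 ≠ 0 ∧ c.1 = 2 ∧ c.2 = 2 then b 13  -- A₁₄ : 0ξ|22
    else if r.1 = 0 ∧ r.2 = 2 ∧ c.1 ≠ 2 ∧ c.2 = 0 then b 14  -- A₁₅ : 02|η0
    else if r.1 = 0 ∧ r.2 = 0 ∧ c.1 = 0 ∧ c.2 ≠ 0 then b 15  -- A₁₆ : 00|0ξ
    else b 16                                                -- A₁₇ : 11|11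

/-- The tile index of a cell. -/
def tidx (r c : Fin 3 × Fin 3) : Fin 17 :=
    if r.1 ≠ 0 ∧ r.2 ≠ 2 ∧ c.1 = 0 ∧ c.2 ≠ 0 then 0
    else if r.1 ≠ 0 ∧ r.2 = 2 ∧ c.1 ≠ 2 ∧ c.2 ≠ 2 then 1
    else if r.1 ≠ 0 ∧ r.2 ≠ 0 ∧ c.1 ≠ 0 ∧ c.2 = 2 then 2
    else if r.1 ≠ 0 ∧ r.2 = 2 ∧ c.1 = 0 ∧ c.2 = 2 then 3
    else if r.1 = 2 ∧ r.2 ≠ 2 ∧ c.1 ≠ 0 ∧ c.2 ≠ 2 then 4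
    else if r.1 = 2 ∧ r.2 ≠ 2 ∧ c.1 = 0 ∧ c.2 = 0 then 5
    else if r.1 = 2 ∧ r.2 = 0 ∧ c.1 ≠ 0 ∧ c.2 = 2 then 6
    else if r.1 = 2 ∧ r.2 = 2 ∧ c.1 = 2 ∧ c.2 ≠ 2 then 7
    else if r.1 ≠ 2 ∧ r.2 ≠ 0 ∧ c.1 = 2 ∧ c.2 ≠ 2 then 8
    else if r.1 ≠ 2 ∧ r.2 = 0 ∧ c.1 ≠ 0 ∧ c.2 ≠ 0 then 9
    else if r.1 ≠ 2 ∧ r.2 ≠ 2 ∧ c.1 ≠ 2 ∧ c.2 = 0 then 10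
    else if r.1 ≠ 2 ∧ r.2 = 0 ∧ c.1 = 2 ∧ c.2 = 0 then 11
    else if r.1 = 0 ∧ r.2 ≠ 0 ∧ c.1 ≠ 2 ∧ c.2 ≠ 0 then 12
    else if r.1 = 0 ∧ r.2 ≠ 0 ∧ c.1 = 2 ∧ c.2 = 2 then 13
    else if r.1 = 0 ∧ r.2 = 2 ∧ c.1 ≠ 2 ∧ c.2 = 0 then 14
    else if r.1 = 0 ∧ r.2 = 0 ∧ c.1 = 0 ∧ c.2 ≠ 0 then 15
    else 16

lemma Nmat_apply (b : Fin 17 → ℂ) (r c : Fin 3 × Fin 3) : Nmat b r c = b (tidx r c) := by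
  simp only [Nmat, tidx, apply_ite b]

open Matrix in
lemma rank_le_one_entries {m n : Type*} [Fintype m] [Fintype n] [DecidableEq n]
    (A : Matrix m n ℂ) (h : A.rank ≤ 1) :
    ∃ w : m → ℂ, ∃ r : n → ℂ, ∀ i j, A i j = r j * w i := by
  rw [Matrix.rank] at h
  obtain ⟨v₀, hv⟩ := finrank_le_one_iff.mp h
  choose r hr using fun j =>
    hv ⟨fun i => A i j, ⟨Pi.single j 1, by
      ext i; simp [Matrix.mulVecLin_apply, Matrix.mulVec_single]⟩⟩
  exact ⟨fun i => (v₀ : m → ℂ) i, r, fun i j => by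
    have := congrFun (congrArg Subtype.val (hr j)) i
    simpa using this.symm⟩

lemma minors_tidx (b : Fin 17 → ℂ) (h : (Nmat b).rank ≤ 1) :
    ∀ r r' c c' : Fin 3 × Fin 3,
      b (tidx r c) * b (tidx r' c') = b (tidx r c') * b (tidx r' c) := by
  obtain ⟨w, v, hw⟩ := rank_le_one_entries _ h
  intro r r' c c'
  rw [← Nmat_apply b r c, ← Nmat_apply b r' c', ← Nmat_apply b r c', ← Nmat_apply b r' c, hw, hw, hw, hw]
  ring
lemma sum_Nmat (b : Fin 17 → ℂ) : ∑ r, ∑ c, Nmat b r c =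
    8*(b 0+b 1+b 2+b 4+b 8+b 9+b 10+b 12) + 2*(b 3+b 5+b 6+b 7+b 11+b 13+b 14+b 15) + b 16 := by
  simp only [Nmat_apply, Fintype.sum_prod_type, Fin.sum_univ_three,
    show tidx (0,0) (0,0) = 10 from rfl,
    show tidx (0,0) (0,1) = 15 from rfl,
    show tidx (0,0) (0,2) = 15 from rfl,
    show tidx (0,0) (1,0) = 10 from rfl,
    show tidx (0,0) (1,1) = 9 from rfl,
    show tidx (0,0) (1,2) = 9 from rfl,
    show tidx (0,0) (2,0) = 11 from rfl,
    show tidx (0,0) (2,1) = 9 from rfl,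
    show tidx (0,0) (2,2) = 9 from rfl,
    show tidx (0,1) (0,0) = 10 from rfl,
    show tidx (0,1) (0,1) = 12 from rfl,
    show tidx (0,1) (0,2) = 12 from rfl,
    show tidx (0,1) (1,0) = 10 from rfl,
    show tidx (0,1) (1,1) = 12 from rfl,
    show tidx (0,1) (1,2) = 12 from rfl,
    show tidx (0,1) (2,0) = 8 from rfl,
    show tidx (0,1) (2,1) = 8 from rfl,
    show tidx (0,1) (2,2) = 13 from rfl,
    show tidx (0,2) (0,0) = 14 from rfl,
    show tidx (0,2) (0,1) = 12 from rfl,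
    show tidx (0,2) (0,2) = 12 from rfl,
    show tidx (0,2) (1,0) = 14 from rfl,
    show tidx (0,2) (1,1) = 12 from rfl,
    show tidx (0,2) (1,2) = 12 from rfl,
    show tidx (0,2) (2,0) = 8 from rfl,
    show tidx (0,2) (2,1) = 8 from rfl,
    show tidx (0,2) (2,2) = 13 from rfl,
    show tidx (1,0) (0,0) = 10 from rfl,
    show tidx (1,0) (0,1) = 0 from rfl,
    show tidx (1,0) (0,2) = 0 from rfl,
    show tidx (1,0) (1,0) = 10 from rfl,
    show tidx (1,0) (1,1) = 9 from rfl,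
    show tidx (1,0) (1,2) = 9 from rfl,
    show tidx (1,0) (2,0) = 11 from rfl,
    show tidx (1,0) (2,1) = 9 from rfl,
    show tidx (1,0) (2,2) = 9 from rfl,
    show tidx (1,1) (0,0) = 10 from rfl,
    show tidx (1,1) (0,1) = 0 from rfl,
    show tidx (1,1) (0,2) = 0 from rfl,
    show tidx (1,1) (1,0) = 10 from rfl,
    show tidx (1,1) (1,1) = 16 from rfl,
    show tidx (1,1) (1,2) = 2 from rfl,
    show tidx (1,1) (2,0) = 8 from rfl,
    show tidx (1,1) (2,1) = 8 from rfl,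
    show tidx (1,1) (2,2) = 2 from rfl,
    show tidx (1,2) (0,0) = 1 from rfl,
    show tidx (1,2) (0,1) = 1 from rfl,
    show tidx (1,2) (0,2) = 3 from rfl,
    show tidx (1,2) (1,0) = 1 from rfl,
    show tidx (1,2) (1,1) = 1 from rfl,
    show tidx (1,2) (1,2) = 2 from rfl,
    show tidx (1,2) (2,0) = 8 from rfl,
    show tidx (1,2) (2,1) = 8 from rfl,
    show tidx (1,2) (2,2) = 2 from rfl,
    show tidx (2,0) (0,0) = 5 from rfl,
    show tidx (2,0) (0,1) = 0 from rfl,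
    show tidx (2,0) (0,2) = 0 from rfl,
    show tidx (2,0) (1,0) = 4 from rfl,
    show tidx (2,0) (1,1) = 4 from rfl,
    show tidx (2,0) (1,2) = 6 from rfl,
    show tidx (2,0) (2,0) = 4 from rfl,
    show tidx (2,0) (2,1) = 4 from rfl,
    show tidx (2,0) (2,2) = 6 from rfl,
    show tidx (2,1) (0,0) = 5 from rfl,
    show tidx (2,1) (0,1) = 0 from rfl,
    show tidx (2,1) (0,2) = 0 from rfl,
    show tidx (2,1) (1,0) = 4 from rfl,
    show tidx (2,1) (1,1) = 4 from rfl,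
    show tidx (2,1) (1,2) = 2 from rfl,
    show tidx (2,1) (2,0) = 4 from rfl,
    show tidx (2,1) (2,1) = 4 from rfl,
    show tidx (2,1) (2,2) = 2 from rfl,
    show tidx (2,2) (0,0) = 1 from rfl,
    show tidx (2,2) (0,1) = 1 from rfl,
    show tidx (2,2) (0,2) = 3 from rfl,
    show tidx (2,2) (1,0) = 1 from rfl,
    show tidx (2,2) (1,1) = 1 from rfl,
    show tidx (2,2) (1,2) = 2 from rfl,
    show tidx (2,2) (2,0) = 7 from rfl,
    show tidx (2,2) (2,1) = 7 from rfl,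
    show tidx (2,2) (2,2) = 2 from rfl]
  ring

lemma master1 (b : Fin 17 → ℂ)
    (hm : ∀ r r' c c' : Fin 3 × Fin 3,
      b (tidx r c) * b (tidx r' c') = b (tidx r c') * b (tidx r' c))
    (hs : 8*(b 0+b 1+b 2+b 4+b 8+b 9+b 10+b 12)
        + 2*(b 3+b 5+b 6+b 7+b 11+b 13+b 14+b 15) + b 16 = 0)
    (h10 : b 10 ≠ 0) :
    4 * b 10 + b 14 = 0 ∧ ∀ i, i ≠ 10 → i ≠ 14 → b i = 0 := by
  have e1 : b 10 * b 12 = b 15 * b 10 := hm (0,0) (0,1) (0,0) (0,1)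
  have e2 : b 10 * b 12 = b 9 * b 10 := hm (0,0) (0,1) (0,0) (1,1)
  have e3 : b 10 * b 8 = b 9 * b 10 := hm (0,0) (0,1) (0,0) (2,1)
  have e4 : b 10 * b 8 = b 11 * b 10 := hm (0,0) (0,1) (0,0) (2,0)
  have e5 : b 10 * b 13 = b 9 * b 10 := hm (0,0) (0,1) (0,0) (2,2)
  have e6 : b 10 * b 0 = b 15 * b 10 := hm (0,0) (1,0) (0,0) (0,1)
  have e7 : b 10 * b 16 = b 9 * b 10 := hm (0,0) (1,1) (0,0) (1,1)
  have e8 : b 10 * b 2 = b 9 * b 10 := hm (0,0) (1,1) (0,0) (1,2)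
  have e9 : b 10 * b 4 = b 10 * b 5 := hm (0,0) (2,0) (0,0) (1,0)
  have hA : b 12 = b 9 := mul_left_cancel₀ h10 (by linear_combination e2)
  have hB : b 15 = b 9 := mul_left_cancel₀ h10 (by linear_combination e2 - e1)
  have hC : b 0 = b 9 := mul_left_cancel₀ h10 (by linear_combination e6 + b 10 * hB)
  have hD : b 8 = b 9 := mul_left_cancel₀ h10 (by linear_combination e3)
  have hE : b 11 = b 9 := mul_left_cancel₀ h10 (by linear_combination e3 - e4)
  have hF : b 13 = b 9 := mul_left_cancel₀ h10 (by linear_combination e5)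
  have hG : b 16 = b 9 := mul_left_cancel₀ h10 (by linear_combination e7)
  have hH : b 2 = b 9 := mul_left_cancel₀ h10 (by linear_combination e8)
  have hI : b 4 = b 5 := mul_left_cancel₀ h10 (by linear_combination e9)
  by_cases ht : b 9 = 0
  · have h12 : b 12 = 0 := hA.trans ht
    have h15 : b 15 = 0 := hB.trans ht
    have h0 : b 0 = 0 := hC.trans ht
    have h8 : b 8 = 0 := hD.trans ht
    have h11 : b 11 = 0 := hE.trans ht
    have h13 : b 13 = 0 := hF.trans ht
    have h16 : b 16 = 0 := hG.trans ht
    have h2 : b 2 = 0 := hH.trans ht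
    have z1 : b 10 * b 1 = b 9 * b 1 := hm (0,0) (1,2) (0,0) (1,1)
    have z2 : b 10 * b 3 = b 15 * b 1 := hm (0,0) (1,2) (0,0) (0,2)
    have z3 : b 10 * b 4 = b 9 * b 5 := hm (0,0) (2,0) (0,0) (1,1)
    have z4 : b 10 * b 6 = b 9 * b 5 := hm (0,0) (2,0) (0,0) (1,2)
    have z5 : b 10 * b 7 = b 11 * b 1 := hm (0,0) (2,2) (0,0) (2,0)
    have h1 : b 1 = 0 :=
      (mul_eq_zero.mp (show b 10 * b 1 = 0 by linear_combination z1 + b 1 * ht)).resolve_left h10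
    have h3 : b 3 = 0 :=
      (mul_eq_zero.mp (show b 10 * b 3 = 0 by linear_combination z2 + b 1 * h15)).resolve_left h10
    have h4 : b 4 = 0 :=
      (mul_eq_zero.mp (show b 10 * b 4 = 0 by linear_combination z3 + b 5 * ht)).resolve_left h10
    have h5 : b 5 = 0 := hI.symm.trans h4
    have h6 : b 6 = 0 :=
      (mul_eq_zero.mp (show b 10 * b 6 = 0 by linear_combination z4 + b 5 * ht)).resolve_left h10
    have h7 : b 7 = 0 :=
      (mul_eq_zero.mp (show b 10 * b 7 = 0 by linear_combination z5 + b 1 * h11)).resolve_left h10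
    refine ⟨?_, ?_⟩
    · linear_combination hs/2 - 4*h0 - 4*h1 - 4*h2 - 4*h4 - 4*h8 - 4*ht - 4*h12
        - h3 - h5 - h6 - h7 - h11 - h13 - h15 - h16/2
    · intro i hi1 hi2
      fin_cases i <;>
        first
          | assumption
          | exact absurd rfl hi1
          | exact absurd rfl hi2
  · exfalso
    have q1 : b 15 * b 5 = b 10 * b 0 := hm (0,0) (2,0) (0,1) (0,0)
    have q3 : b 15 * b 6 = b 9 * b 0 := hm (0,0) (2,0) (0,1) (1,2)
    have q4 : b 11 * b 1 = b 10 * b 8 := hm (0,0) (1,2) (2,0) (0,0)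
    have q5 : b 11 * b 3 = b 15 * b 8 := hm (0,0) (1,2) (2,0) (0,2)
    have q6 : b 9 * b 7 = b 11 * b 2 := hm (0,0) (2,2) (1,2) (2,0)
    have q7 : b 15 * b 14 = b 10 * b 12 := hm (0,0) (0,2) (0,1) (0,0)
    have q8 : b 10 * b 1 = b 15 * b 1 := hm (0,0) (1,2) (0,0) (0,1)
    have Q1 : b 5 = b 10 := mul_right_cancel₀ ht (by linear_combination q1 - b 5 * hB + b 10 * hC)
    have Q2 : b 4 = b 10 := hI.trans Q1
    have Q3 : b 6 = b 9 := mul_left_cancel₀ ht (by linear_combination q3 - b 6 * hB + b 9 * hC)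
    have Q4 : b 1 = b 10 := mul_right_cancel₀ ht (by linear_combination q4 - b 1 * hE + b 10 * hD)
    have Q5 : b 3 = b 9 := mul_left_cancel₀ ht
      (by linear_combination q5 - b 3 * hE + b 8 * hB + b 9 * hD)
    have Q6 : b 7 = b 9 := mul_left_cancel₀ ht (by linear_combination q6 + b 2 * hE + b 9 * hH)
    have Q7 : b 14 = b 10 := mul_left_cancel₀ ht (by linear_combination q7 - b 14 * hB + b 10 * hA)
    have Q8 : b 10 = b 9 := mul_right_cancel₀ h10
      (by linear_combination q8 - b 10 * Q4 + b 1 * hB + b 9 * Q4)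
    rw [hC, Q4, hH, Q2, hD, hA, Q5, Q1, Q3, Q6, hE, hF, Q7, hB, hG] at hs
    rw [Q8] at hs
    exact ht (by linear_combination hs / 81)

lemma master2 (b : Fin 17 → ℂ)
    (hm : ∀ r r' c c' : Fin 3 × Fin 3,
      b (tidx r c) * b (tidx r' c') = b (tidx r c') * b (tidx r' c))
    (hs : 8*(b 0+b 1+b 2+b 4+b 8+b 9+b 10+b 12)
        + 2*(b 3+b 5+b 6+b 7+b 11+b 13+b 14+b 15) + b 16 = 0)
    (h0 : b 0 = 0) (h1 : b 1 = 0) (h2 : b 2 = 0) (h4 : b 4 = 0)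
    (h8 : b 8 = 0) (h9 : b 9 = 0) (h10 : b 10 = 0) (h12 : b 12 = 0) :
    b 14 = 0 := by
  by_contra h14
  have s1 : b 14 * b 15 = b 12 * b 10 := hm (0,2) (0,0) (0,0) (0,1)
  have s2 : b 14 * b 11 = b 8 * b 10 := hm (0,2) (0,0) (0,0) (2,0)
  have s3 : b 14 * b 16 = b 12 * b 10 := hm (0,2) (1,1) (0,0) (1,1)
  have s4 : b 14 * b 3 = b 12 * b 1 := hm (0,2) (1,2) (0,0) (0,2)
  have s5 : b 14 * b 5 = b 14 * b 4 := hm (0,2) (2,0) (1,0) (0,0)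
  have s6 : b 14 * b 6 = b 12 * b 5 := hm (0,2) (2,0) (0,0) (1,2)
  have s7 : b 14 * b 7 = b 8 * b 1 := hm (0,2) (2,2) (0,0) (2,0)
  have s8 : b 14 * b 13 = b 13 * b 10 := hm (0,2) (0,1) (0,0) (2,2)
  have h15 : b 15 = 0 :=
    (mul_eq_zero.mp (show b 14 * b 15 = 0 by linear_combination s1 + b 10 * h12)).resolve_left h14
  have h11 : b 11 = 0 :=
    (mul_eq_zero.mp (show b 14 * b 11 = 0 by linear_combination s2 + b 10 * h8)).resolve_left h14
  have h16 : b 16 = 0 :=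
    (mul_eq_zero.mp (show b 14 * b 16 = 0 by linear_combination s3 + b 10 * h12)).resolve_left h14
  have h3 : b 3 = 0 :=
    (mul_eq_zero.mp (show b 14 * b 3 = 0 by linear_combination s4 + b 1 * h12)).resolve_left h14
  have h5 : b 5 = 0 :=
    (mul_eq_zero.mp (show b 14 * b 5 = 0 by linear_combination s5 + b 14 * h4)).resolve_left h14
  have h6 : b 6 = 0 :=
    (mul_eq_zero.mp (show b 14 * b 6 = 0 by linear_combination s6 + b 5 * h12)).resolve_left h14
  have h7 : b 7 = 0 :=
    (mul_eq_zero.mp (show b 14 * b 7 = 0 by linear_combination s7 + b 1 * h8)).resolve_left h14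
  have h13 : b 13 = 0 :=
    (mul_eq_zero.mp (show b 14 * b 13 = 0 by linear_combination s8 + b 13 * h10)).resolve_left h14
  exact h14 (by linear_combination hs/2 - 4*h0 - 4*h1 - 4*h2 - 4*h4 - 4*h8 - 4*h9 - 4*h10
    - 4*h12 - h3 - h5 - h6 - h7 - h11 - h13 - h15 - h16/2)

def rotP : Fin 3 × Fin 3 → Fin 3 × Fin 3 := fun p => (p.2, p.1.rev)
def rotM : Fin 3 × Fin 3 → Fin 3 × Fin 3 := fun p => (p.2.rev, p.1)
def revP : Fin 3 × Fin 3 → Fin 3 × Fin 3 := fun p => (p.1.rev, p.2.rev)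

def fg1 : Fin 17 → Fin 17 := ![10, 4, 0, 5, 9, 11, 15, 6, 2, 12, 8, 13, 1, 3, 7, 14, 16]
def gg1 : Fin 17 → Fin 17 := ![2, 12, 8, 13, 1, 3, 7, 14, 10, 4, 0, 5, 9, 11, 15, 6, 16]
def fg2 : Fin 17 → Fin 17 := ![2, 12, 8, 13, 1, 3, 7, 14, 10, 4, 0, 5, 9, 11, 15, 6, 16]
def gg2 : Fin 17 → Fin 17 := ![10, 4, 0, 5, 9, 11, 15, 6, 2, 12, 8, 13, 1, 3, 7, 14, 16]
def fg3 : Fin 17 → Fin 17 := ![8, 9, 10, 11, 12, 13, 14, 15, 0, 1, 2, 3, 4, 5, 6, 7, 16]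
def gg3 : Fin 17 → Fin 17 := ![8, 9, 10, 11, 12, 13, 14, 15, 0, 1, 2, 3, 4, 5, 6, 7, 16]
def fg4 : Fin 17 → Fin 17 := ![4, 2, 9, 6, 8, 7, 11, 13, 12, 10, 1, 14, 0, 15, 3, 5, 16]
def gg4 : Fin 17 → Fin 17 := ![12, 10, 1, 14, 0, 15, 3, 5, 4, 2, 9, 6, 8, 7, 11, 13, 16]
def fg5 : Fin 17 → Fin 17 := ![1, 8, 4, 7, 10, 14, 5, 11, 9, 0, 12, 15, 2, 6, 13, 3, 16]
def gg5 : Fin 17 → Fin 17 := ![9, 0, 12, 15, 2, 6, 13, 3, 1, 8, 4, 7, 10, 14, 5, 11, 16]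
def fg6 : Fin 17 → Fin 17 := ![9, 0, 12, 15, 2, 6, 13, 3, 1, 8, 4, 7, 10, 14, 5, 11, 16]
def gg6 : Fin 17 → Fin 17 := ![1, 8, 4, 7, 10, 14, 5, 11, 9, 0, 12, 15, 2, 6, 13, 3, 16]
def fg7 : Fin 17 → Fin 17 := ![12, 10, 1, 14, 0, 15, 3, 5, 4, 2, 9, 6, 8, 7, 11, 13, 16]
def gg7 : Fin 17 → Fin 17 := ![4, 2, 9, 6, 8, 7, 11, 13, 12, 10, 1, 14, 0, 15, 3, 5, 16]

lemma hm_comp (b : Fin 17 → ℂ) (f : Fin 17 → Fin 17) (σ τ : Fin 3 × Fin 3 → Fin 3 × Fin 3)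
    (hT : ∀ r c, f (tidx r c) = tidx (σ r) (τ c))
    (hm : ∀ r r' c c' : Fin 3 × Fin 3,
      b (tidx r c) * b (tidx r' c') = b (tidx r c') * b (tidx r' c)) :
    ∀ r r' c c' : Fin 3 × Fin 3,
      b (f (tidx r c)) * b (f (tidx r' c')) = b (f (tidx r c')) * b (f (tidx r' c)) :=
  fun r r' c c' => by rw [hT, hT, hT, hT]; exact hm _ _ _ _

lemma hm_comp' (b : Fin 17 → ℂ) (f : Fin 17 → Fin 17) (σ τ : Fin 3 × Fin 3 → Fin 3 × Fin 3)
    (hT : ∀ r c, f (tidx r c) = tidx (τ c) (σ r))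
    (hm : ∀ r r' c c' : Fin 3 × Fin 3,
      b (tidx r c) * b (tidx r' c') = b (tidx r c') * b (tidx r' c)) :
    ∀ r r' c c' : Fin 3 × Fin 3,
      b (f (tidx r c)) * b (f (tidx r' c')) = b (f (tidx r c')) * b (f (tidx r' c)) :=
  fun r r' c c' => by
    rw [hT, hT, hT, hT]; linear_combination hm (τ c) (τ c') (σ r) (σ r')

lemma transport1 (b : Fin 17 → ℂ) (f g : Fin 17 → Fin 17) (hfg : ∀ j, f (g j) = j)
    (hmf : ∀ r r' c c' : Fin 3 × Fin 3,
      b (f (tidx r c)) * b (f (tidx r' c')) = b (f (tidx r c')) * b (f (tidx r' c)))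
    (hs : 8*(b (f 0)+b (f 1)+b (f 2)+b (f 4)+b (f 8)+b (f 9)+b (f 10)+b (f 12))
        + 2*(b (f 3)+b (f 5)+b (f 6)+b (f 7)+b (f 11)+b (f 13)+b (f 14)+b (f 15))
        + b (f 16) = 0)
    (h10 : b (f 10) ≠ 0) :
    4 * b (f 10) + b (f 14) = 0 ∧ ∀ i, i ≠ f 10 → i ≠ f 14 → b i = 0 := by
  have h := master1 (fun i => b (f i)) hmf hs h10
  refine ⟨h.1, fun j hj1 hj2 => ?_⟩
  have h2 := h.2 (g j) (fun e => hj1 (by rw [← hfg j, e])) (fun e => hj2 (by rw [← hfg j, e]))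
  simpa only [hfg j] using h2

/-- If the 9×9 AB|CD tile-pattern matrix has rank ≤ 1 and total sum 0, one of
the eight listed cases holds. -/
theorem stmt_18 (b : Fin 17 → ℂ) (hrank : (Nmat b).rank ≤ 1)
    (hsum : ∑ r, ∑ c, Nmat b r c = 0) :
    (4 * b 0 + b 15 = 0 ∧ ∀ i, i ≠ 0 → i ≠ 15 → b i = 0) ∨
    (4 * b 1 + b 3 = 0 ∧ ∀ i, i ≠ 1 → i ≠ 3 → b i = 0) ∨
    (4 * b 2 + b 6 = 0 ∧ ∀ i, i ≠ 2 → i ≠ 6 → b i = 0) ∨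
    (4 * b 4 + b 5 = 0 ∧ ∀ i, i ≠ 4 → i ≠ 5 → b i = 0) ∨
    (4 * b 8 + b 7 = 0 ∧ ∀ i, i ≠ 8 → i ≠ 7 → b i = 0) ∨
    (4 * b 9 + b 11 = 0 ∧ ∀ i, i ≠ 9 → i ≠ 11 → b i = 0) ∨
    (4 * b 10 + b 14 = 0 ∧ ∀ i, i ≠ 10 → i ≠ 14 → b i = 0) ∨
    (4 * b 12 + b 13 = 0 ∧ ∀ i, i ≠ 12 → i ≠ 13 → b i = 0) := by
  have hm := minors_tidx b hrank
  rw [sum_Nmat] at hsum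
  have hTg1 : ∀ r c, fg1 (tidx r c) = tidx (rotP r) (rotM c) := by decide
  have hIg1 : ∀ j, fg1 (gg1 j) = j := by decide
  have hTg2 : ∀ r c, fg2 (tidx r c) = tidx (rotM r) (rotP c) := by decide
  have hIg2 : ∀ j, fg2 (gg2 j) = j := by decide
  have hTg3 : ∀ r c, fg3 (tidx r c) = tidx (revP r) (revP c) := by decide
  have hIg3 : ∀ j, fg3 (gg3 j) = j := by decide
  have hTg4 : ∀ r c, fg4 (tidx r c) = tidx (revP c) (id r) := by decide
  have hIg4 : ∀ j, fg4 (gg4 j) = j := by decide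
  have hTg5 : ∀ r c, fg5 (tidx r c) = tidx (rotP c) (rotP r) := by decide
  have hIg5 : ∀ j, fg5 (gg5 j) = j := by decide
  have hTg6 : ∀ r c, fg6 (tidx r c) = tidx (rotM c) (rotM r) := by decide
  have hIg6 : ∀ j, fg6 (gg6 j) = j := by decide
  have hTg7 : ∀ r c, fg7 (tidx r c) = tidx (id c) (revP r) := by decide
  have hIg7 : ∀ j, fg7 (gg7 j) = j := by decide
  have hsg1 : 8*(b 10+b 4+b 0+b 9+b 2+b 12+b 8+b 1) + 2*(b 5+b 11+b 15+b 6+b 13+b 3+b 7+b 14) + b 16 = 0 := by linear_combination hsum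
  have hmfg1 := hm_comp b fg1 rotP rotM hTg1 hm
  have hsg2 : 8*(b 2+b 12+b 8+b 1+b 10+b 4+b 0+b 9) + 2*(b 13+b 3+b 7+b 14+b 5+b 11+b 15+b 6) + b 16 = 0 := by linear_combination hsum
  have hmfg2 := hm_comp b fg2 rotM rotP hTg2 hm
  have hsg3 : 8*(b 8+b 9+b 10+b 12+b 0+b 1+b 2+b 4) + 2*(b 11+b 13+b 14+b 15+b 3+b 5+b 6+b 7) + b 16 = 0 := by linear_combination hsum
  have hmfg3 := hm_comp b fg3 revP revP hTg3 hm
  have hsg4 : 8*(b 4+b 2+b 9+b 8+b 12+b 10+b 1+b 0) + 2*(b 6+b 7+b 11+b 13+b 14+b 15+b 3+b 5) + b 16 = 0 := by linear_combination hsum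
  have hmfg4 := hm_comp' b fg4 id revP hTg4 hm
  have hsg5 : 8*(b 1+b 8+b 4+b 10+b 9+b 0+b 12+b 2) + 2*(b 7+b 14+b 5+b 11+b 15+b 6+b 13+b 3) + b 16 = 0 := by linear_combination hsum
  have hmfg5 := hm_comp' b fg5 rotP rotP hTg5 hm
  have hsg6 : 8*(b 9+b 0+b 12+b 2+b 1+b 8+b 4+b 10) + 2*(b 15+b 6+b 13+b 3+b 7+b 14+b 5+b 11) + b 16 = 0 := by linear_combination hsum
  have hmfg6 := hm_comp' b fg6 rotM rotM hTg6 hm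
  have hsg7 : 8*(b 12+b 10+b 1+b 0+b 4+b 2+b 9+b 8) + 2*(b 14+b 15+b 3+b 5+b 6+b 7+b 11+b 13) + b 16 = 0 := by linear_combination hsum
  have hmfg7 := hm_comp' b fg7 revP id hTg7 hm
  rcases ne_or_eq (b 10) 0 with h|z10
  · exact Or.inr (Or.inr (Or.inr (Or.inr (Or.inr (Or.inr (Or.inl (master1 b hm hsum h)))))))
  rcases ne_or_eq (b 0) 0 with h|z0
  · exact Or.inl (transport1 b fg2 gg2 hIg2 hmfg2 hsg2 h)
  rcases ne_or_eq (b 1) 0 with h|z1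
  · exact Or.inr (Or.inl (transport1 b fg4 gg4 hIg4 hmfg4 hsg4 h))
  rcases ne_or_eq (b 2) 0 with h|z2
  · exact Or.inr (Or.inr (Or.inl (transport1 b fg3 gg3 hIg3 hmfg3 hsg3 h)))
  rcases ne_or_eq (b 4) 0 with h|z4
  · exact Or.inr (Or.inr (Or.inr (Or.inl (transport1 b fg6 gg6 hIg6 hmfg6 hsg6 h))))
  rcases ne_or_eq (b 8) 0 with h|z8
  · exact Or.inr (Or.inr (Or.inr (Or.inr (Or.inl (transport1 b fg1 gg1 hIg1 hmfg1 hsg1 h)))))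
  rcases ne_or_eq (b 9) 0 with h|z9
  · exact Or.inr (Or.inr (Or.inr (Or.inr (Or.inr (Or.inl (transport1 b fg7 gg7 hIg7 hmfg7 hsg7 h))))))
  rcases ne_or_eq (b 12) 0 with h|z12
  · exact Or.inr (Or.inr (Or.inr (Or.inr (Or.inr (Or.inr (Or.inr (transport1 b fg5 gg5 hIg5 hmfg5 hsg5 h)))))))
  have z14 : b 14 = 0 := master2 b hm hsum z0 z1 z2 z4 z8 z9 z10 z12
  have z7 : b 7 = 0 := master2 (fun i => b (fg1 i)) hmfg1 hsg1 z10 z4 z0 z9 z2 z12 z8 z1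
  have z15 : b 15 = 0 := master2 (fun i => b (fg2 i)) hmfg2 hsg2 z2 z12 z8 z1 z10 z4 z0 z9
  have z6 : b 6 = 0 := master2 (fun i => b (fg3 i)) hmfg3 hsg3 z8 z9 z10 z12 z0 z1 z2 z4
  have z3 : b 3 = 0 := master2 (fun i => b (fg4 i)) hmfg4 hsg4 z4 z2 z9 z8 z12 z10 z1 z0
  have z13 : b 13 = 0 := master2 (fun i => b (fg5 i)) hmfg5 hsg5 z1 z8 z4 z10 z9 z0 z12 z2
  have z5 : b 5 = 0 := master2 (fun i => b (fg6 i)) hmfg6 hsg6 z9 z0 z12 z2 z1 z8 z4 z10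
  have z11 : b 11 = 0 := master2 (fun i => b (fg7 i)) hmfg7 hsg7 z12 z10 z1 z0 z4 z2 z9 z8
  have z16 : b 16 = 0 := by linear_combination hsum - 8*(z0+z1+z2+z4+z8+z9+z10+z12) - 2*(z3+z5+z6+z7+z11+z13+z14+z15)
  exact Or.inl ⟨by rw [z0, z15]; ring, fun i _ _ => by fin_cases i <;> assumption⟩
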